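/- arXiv:2509.13673 — 3 statements merged into one kernel-verified Lean document; each statement's English description precedes it below -/
import Mathlib

section
/- Let e ≥ 1 be even, and let G be a finite group with |G| = 2M, a central involution z, and exactly M linear characters, such that the number of conjugacy classes of G is M + M/2^{e} and the center of G has order 2M/2^{e}. Then G has exactly M/2^{e} nonlinear irreducible characters, each of degree 2^{e/2}. -/
open CategoryTheory
open scoped commutatorElement

section Aux

variable {G : Type} [Group G] [Fintype G]

private lemma schur_scalar (V : FDRep ℂ G) [Simple V] (g : G)
    (hg : ∀ x : G, V.ρ (x * g) = V.ρ (g * x)) :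
    ∃ c : ℂ, V.ρ g = c • (LinearMap.id : V →ₗ[ℂ] V) := by
  have hcomm : ∀ h : G, (V.ρ g).comp (V.ρ h) = (V.ρ h).comp (V.ρ g) := by
    intro h
    rw [← Module.End.mul_eq_comp, ← Module.End.mul_eq_comp, ← map_mul, ← map_mul, hg h]
  let f : V ⟶ V := ⟨ObjectProperty.homMk (ModuleCat.ofHom (V.ρ g)), fun h => by
    ext v; exact LinearMap.congr_fun (hcomm h) v⟩
  obtain ⟨c, hc⟩ := CategoryTheory.endomorphism_simple_eq_smul_id ℂ f
  refine ⟨c, ?_⟩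
  have := congrArg (fun φ => φ.hom.hom.hom) hc
  have h2 := this.symm
  simp [f] at h2
  rw [h2]
  rfl

private lemma sum_char_mul_char_inv (V : FDRep ℂ G) [Simple V] :
    ∑ g : G, V.character g * V.character g⁻¹ = (Fintype.card G : ℂ) := by
  have hcne : (Fintype.card G : ℂ) ≠ 0 := Nat.cast_ne_zero.mpr Fintype.card_ne_zero
  haveI : Invertible ((Nat.card G : ℂ)) :=
    invertibleOfNonzero (by rw [Nat.card_eq_fintype_card]; exact hcne)
  have h := FDRep.char_orthonormal (k := ℂ) V V
  rw [if_pos ⟨Iso.refl V⟩] at h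
  have h3 : (Fintype.card G : ℂ)⁻¹ * ∑ g : G, V.character g * V.character g⁻¹ = 1 := by
    simpa [smul_eq_mul, invOf_eq_inv, Nat.card_eq_fintype_card] using h
  exact ((inv_mul_eq_one₀ hcne).mp h3).symm

private lemma trace_smul_id (V : FDRep ℂ G) (c : ℂ) :
    LinearMap.trace ℂ V (c • (LinearMap.id : V →ₗ[ℂ] V)) = c * (Module.finrank ℂ V : ℂ) := by
  rw [map_smul, LinearMap.trace_id, smul_eq_mul]

private lemma smul_id_mul (V : FDRep ℂ G) (c c' : ℂ) :
    (c • (LinearMap.id : V →ₗ[ℂ] V)) * (c' • (LinearMap.id : V →ₗ[ℂ] V)) =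
      (c * c') • (LinearMap.id : V →ₗ[ℂ] V) := by
  apply LinearMap.ext
  intro v
  simp [Module.End.mul_apply, smul_smul, mul_comm]

end Aux

/-- Let `G` be a finite group with `|G| = 2M`, a central involution `z`, exactly `M`
linear characters (i.e. the abelianization has order `M`), center of order
`2M/2^e` for an even `e ≥ 1`, and class number `M + M/2^e`. Then `G` has `M/2^e`
nonlinear irreducible complex characters, each of degree `2^{e/2}`. -/
theorem stmt_7 (G : Type) [Group G] [Fintype G] (M e : ℕ) (he : 1 ≤ e)
    (heven : Even e) (z : G) (hz : z ∈ Subgroup.center G) (hz2 : orderOf z = 2)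
    (hG : Fintype.card G = 2 * M)
    (hlin : Nat.card (Abelianization G) = M)
    (hcen : Nat.card (Subgroup.center G) = 2 * M / 2 ^ e)
    (hcl : Nat.card (ConjClasses G) = M + M / 2 ^ e) :
    Nat.card (ConjClasses G) - M = M / 2 ^ e ∧
    ∀ V : FDRep ℂ G, Simple V → V.character 1 ≠ 1 →
      V.character 1 = 2 ^ (e / 2) := by
  classical
  have hM : 0 < M := by
    have h1 : 0 < Fintype.card G := Fintype.card_pos
    omega
  refine ⟨by rw [hcl]; exact Nat.add_sub_cancel_left .., ?_⟩
  intro V hSimple hVne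
  haveI := hSimple
  -- the commutator subgroup has order 2
  have hcard : Nat.card G = 2 * M := by rw [Nat.card_eq_fintype_card, hG]
  have habel : Nat.card (G ⧸ commutator G) = M := hlin
  have hcomm2 : Nat.card (commutator G) = 2 := by
    have h := Subgroup.card_eq_card_quotient_mul_card_subgroup (commutator G)
    rw [hcard, habel] at h
    exact (Nat.eq_of_mul_eq_mul_left hM (by rw [mul_comm]; exact h)).symm
  obtain ⟨t, ht1, htuniq⟩ := (Nat.card_eq_two_iff' (1 : commutator G)).mp hcomm2
  set tG : G := (t : G) with htGdef
  have htG1 : tG ≠ 1 := fun h => ht1 (Subtype.ext h)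
  have huniq : ∀ u : G, u ∈ commutator G → u ≠ 1 → u = tG := by
    intro u hu hne
    have : (⟨u, hu⟩ : commutator G) = t :=
      htuniq ⟨u, hu⟩ (fun h => hne (congrArg Subtype.val h))
    exact congrArg Subtype.val this
  have hdich : ∀ u : G, u ∈ commutator G → u = 1 ∨ u = tG := by
    intro u hu
    by_cases h : u = 1
    · exact Or.inl h
    · exact Or.inr (huniq u hu h)
  have hmem : ∀ g x : G, ⁅g, x⁆ ∈ commutator G := by
    intro g x
    rw [commutator_def]
    exact Subgroup.commutator_mem_commutator (Subgroup.mem_top g) (Subgroup.mem_top x)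
  -- t is central and t * t = 1
  have htcen : ∀ x : G, x * tG = tG * x := by
    intro x
    have h1 : x * tG * x⁻¹ ∈ commutator G := Subgroup.Normal.conj_mem inferInstance tG t.2 x
    have h2 : x * tG * x⁻¹ ≠ 1 := by
      intro h
      apply htG1
      have h' := congrArg (fun y => x⁻¹ * y * x) h
      simpa [mul_assoc] using h'
    have h3 : x * tG * x⁻¹ = tG := (hdich _ h1).resolve_left h2
    rw [mul_inv_eq_iff_eq_mul] at h3
    exact h3
  have htt : tG * tG = 1 := by
    have hmem2 : tG * tG ∈ commutator G := mul_mem t.2 t.2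
    rcases hdich _ hmem2 with h | h
    · exact h
    · exact absurd (mul_left_cancel (a := tG)
        (show tG * tG = tG * 1 by rw [mul_one]; exact h)) htG1
  -- every square is central
  have hsq : ∀ g : G, g * g ∈ Subgroup.center G := by
    intro g
    rw [Subgroup.mem_center_iff]
    intro x
    symm
    set c : G := ⁅g, x⁆ with hcdef
    have hcmem : c ∈ commutator G := hmem g x
    have hc1 : g * c = c * g := by
      rcases hdich c hcmem with h | h
      · rw [h, mul_one, one_mul]
      · rw [h]; exact htcen g
    have hc2 : c * c = 1 := by
      rcases hdich c hcmem with h | h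
      · rw [h, mul_one]
      · rw [h]; exact htt
    have e1 : g * x = c * (x * g) := by
      rw [hcdef, commutatorElement_def]; group
    calc g * g * x = g * (g * x) := by group
      _ = g * (c * (x * g)) := by rw [← e1]
      _ = (g * c) * (x * g) := by group
      _ = (c * g) * (x * g) := by rw [hc1]
      _ = c * ((g * x) * g) := by group
      _ = c * ((c * (x * g)) * g) := by rw [← e1]
      _ = (c * c) * (x * (g * g)) := by group
      _ = x * (g * g) := by rw [hc2, one_mul]
  -- the quotient by the center is a 2-group
  have hQsq : ∀ q : G ⧸ Subgroup.center G, q * q = 1 := by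
    intro q
    refine QuotientGroup.induction_on q ?_
    intro g
    show ((g : G ⧸ Subgroup.center G) * (g : G ⧸ Subgroup.center G)) = 1
    rw [← QuotientGroup.mk_mul, QuotientGroup.eq_one_iff]
    exact hsq g
  obtain ⟨fexp, hf⟩ : ∃ f, Nat.card (G ⧸ Subgroup.center G) = 2 ^ f := by
    have hn0 : Nat.card (G ⧸ Subgroup.center G) ≠ 0 := Nat.card_pos.ne'
    have hdvd : ∀ {p : ℕ}, p.Prime → p ∣ Nat.card (G ⧸ Subgroup.center G) → p = 2 := by
      intro p hp hdp
      haveI : Fact p.Prime := ⟨hp⟩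
      obtain ⟨x, hx⟩ := exists_prime_orderOf_dvd_card' (G := G ⧸ Subgroup.center G) p hdp
      have h2 : orderOf x ∣ 2 := orderOf_dvd_of_pow_eq_one (by rw [pow_two]; exact hQsq x)
      rw [hx] at h2
      exact (Nat.prime_dvd_prime_iff_eq hp Nat.prime_two).mp h2
    exact ⟨_, Nat.eq_prime_pow_of_unique_prime_dvd hn0 hdvd⟩
  set K := Nat.card (Subgroup.center G) with hKdef
  have hK1 : 1 ≤ K := Nat.card_pos
  have hKQ : 2 ^ fexp * K = 2 * M := by
    rw [← hf, ← Subgroup.card_eq_card_quotient_mul_card_subgroup (Subgroup.center G), hcard]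
  -- from hcen, fexp = e
  have h2M : 2 * M = 2 ^ e * K := by
    rcases le_or_gt e fexp with hle | hlt
    · have hsplit : 2 * M = 2 ^ e * (2 ^ (fexp - e) * K) := by
        rw [← mul_assoc, ← pow_add, Nat.add_sub_cancel' hle, hKQ]
      have hKeq : K = 2 ^ (fexp - e) * K := by
        conv_lhs => rw [hcen]
        rw [hsplit, Nat.mul_div_cancel_left _ (pow_pos (by norm_num : (0:ℕ) < 2) e)]
      have hone : fexp - e = 0 := by
        by_contra hne
        have ha : 2 ≤ 2 ^ (fexp - e) := by
          calc (2:ℕ) = 2 ^ 1 := by norm_num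
            _ ≤ 2 ^ (fexp - e) := Nat.pow_le_pow_right (by norm_num) (by omega)
        have hge : 2 * K ≤ 2 ^ (fexp - e) * K := Nat.mul_le_mul_right K ha
        rw [← hKeq] at hge
        omega
      have hfe : fexp = e := by omega
      rw [← hfe, hKQ]
    · exfalso
      have hsplit : (2:ℕ) ^ e = 2 ^ fexp * 2 ^ (e - fexp) := by
        rw [← pow_add, Nat.add_sub_cancel' hlt.le]
      have hKeq : K = K / 2 ^ (e - fexp) := by
        conv_lhs => rw [hcen]
        rw [← hKQ, hsplit,
          Nat.mul_div_mul_left _ _ (pow_pos (by norm_num : (0:ℕ) < 2) fexp)]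
      have h2le : 2 ≤ 2 ^ (e - fexp) := by
        calc (2:ℕ) = 2 ^ 1 := by norm_num
          _ ≤ 2 ^ (e - fexp) := Nat.pow_le_pow_right (by norm_num) (by omega)
      have hle1 : K / 2 ^ (e - fexp) ≤ K / 2 := Nat.div_le_div_left h2le (by norm_num)
      have hle2 : K / 2 < K := Nat.div_lt_self (by omega) (by norm_num)
      omega
  -- now the representation theory
  set n := Module.finrank ℂ V with hn
  have hchar1 : V.character 1 = (n : ℂ) := by rw [FDRep.char_one, hn]
  have horth : ∑ g : G, V.character g * V.character g⁻¹ = ((2 * M : ℕ) : ℂ) := by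
    rw [sum_char_mul_char_inv V, hG]
  have h2M0 : ((2 * M : ℕ) : ℂ) ≠ 0 := Nat.cast_ne_zero.mpr (by omega)
  have hn0 : n ≠ 0 := by
    intro h0
    haveI : Subsingleton V := Module.finrank_zero_iff.mp (hn ▸ h0)
    have hzero : ∀ g : G, V.character g = 0 := by
      intro g
      show LinearMap.trace ℂ V (V.ρ g) = 0
      rw [Subsingleton.elim (V.ρ g) 0, map_zero]
    rw [Finset.sum_congr rfl (fun g _ => by rw [hzero g, zero_mul])] at horth
    simp at horth
    omega
  have hnC0 : (n : ℂ) ≠ 0 := Nat.cast_ne_zero.mpr hn0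
  -- scalar action and its consequences
  have hscalar_term : ∀ g : G, (∀ x : G, V.ρ (x * g) = V.ρ (g * x)) →
      (∀ x : G, V.ρ (x * g⁻¹) = V.ρ (g⁻¹ * x)) →
      V.character g * V.character g⁻¹ = (n : ℂ) * n := by
    intro g hg hg'
    obtain ⟨c, hc⟩ := schur_scalar V g hg
    obtain ⟨c', hc'⟩ := schur_scalar V g⁻¹ hg'
    have hmul : V.ρ g * V.ρ g⁻¹ = LinearMap.id := by
      rw [← map_mul, mul_inv_cancel, map_one]; rfl
    rw [hc, hc', smul_id_mul] at hmul
    have htr := congrArg (LinearMap.trace ℂ V) hmul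
    rw [trace_smul_id, LinearMap.trace_id] at htr
    have hcc' : c * c' = 1 := mul_right_cancel₀ hnC0 (by rw [htr, one_mul])
    show LinearMap.trace ℂ V (V.ρ g) * LinearMap.trace ℂ V (V.ρ g⁻¹) = (n:ℂ) * n
    rw [hc, hc', trace_smul_id, trace_smul_id]
    calc c * n * (c' * n) = (c * c') * ((n:ℂ) * n) := by ring
      _ = (n:ℂ) * n := by rw [hcc', one_mul]
  -- scalar action of t
  have htρ : ∀ x : G, V.ρ (x * tG) = V.ρ (tG * x) := fun x => by rw [htcen x]
  obtain ⟨ct, hct⟩ := schur_scalar V tG htρ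
  have hct2 : ct * ct = 1 := by
    have hmul : V.ρ tG * V.ρ tG = LinearMap.id := by
      rw [← map_mul, htt, map_one]; rfl
    rw [hct, smul_id_mul] at hmul
    have htr := congrArg (LinearMap.trace ℂ V) hmul
    rw [trace_smul_id, LinearMap.trace_id] at htr
    exact mul_right_cancel₀ hnC0 (by rw [htr, one_mul])
  rcases mul_self_eq_one_iff.mp hct2 with hct1 | hctm1
  · -- t acts trivially: every ρ g is a scalar, so n = 1, contradiction
    exfalso
    have hctid : V.ρ tG = LinearMap.id := by rw [hct, hct1, one_smul]
    have hall : ∀ g x : G, V.ρ (x * g) = V.ρ (g * x) := by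
      intro g x
      have e1 : x * g = ⁅x, g⁆ * (g * x) := by rw [commutatorElement_def]; group
      rw [e1, map_mul]
      rcases hdich ⁅x, g⁆ (hmem x g) with h | h
      · rw [h, map_one, one_mul]
      · rw [h, hctid, Module.End.mul_eq_comp, LinearMap.id_comp]
    have hsum : ∑ g : G, V.character g * V.character g⁻¹ =
        (Fintype.card G : ℂ) * ((n:ℂ) * n) := by
      rw [Finset.sum_congr rfl (fun g _ => hscalar_term g (hall g) (hall g⁻¹)),
        Finset.sum_const, nsmul_eq_mul, Finset.card_univ]
    rw [hsum, hG] at horth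
    have hnn : (n : ℂ) * n = 1 := mul_left_cancel₀ h2M0 (by rw [mul_one]; exact horth)
    have hnn' : n * n = 1 := by exact_mod_cast hnn
    have h1 : n = 1 := Nat.dvd_one.mp ⟨n, hnn'.symm⟩
    exact hVne (by rw [hchar1, h1, Nat.cast_one])
  · -- t acts by -1: the character vanishes off the center
    have hvanish : ∀ g : G, g ∉ Subgroup.center G → V.character g = 0 := by
      intro g hgZ
      have hnc : ¬ ∀ x : G, x * g = g * x := fun h => hgZ (Subgroup.mem_center_iff.mpr h)
      push_neg at hnc
      obtain ⟨x, hx⟩ := hnc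
      set c : G := ⁅g⁻¹, x⁆ with hcdef
      have hcne1 : c ≠ 1 := by
        intro h
        apply hx
        have hcc : g⁻¹ * x * g * x⁻¹ = 1 := by
          have h' := h
          rw [hcdef, commutatorElement_def, inv_inv] at h'
          exact h'
        calc x * g = g * (g⁻¹ * x * g * x⁻¹) * x := by group
          _ = g * x := by rw [hcc]; group
      have hceq : c = tG := (hdich c (hmem g⁻¹ x)).resolve_left hcne1
      have hconj : x * g * x⁻¹ = g * tG := by
        rw [← hceq, hcdef, commutatorElement_def]; group
      have h1 : V.character (x * g * x⁻¹) = V.character g := FDRep.char_conj V g x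
      have h3 : V.character (g * tG) = -V.character g := by
        show LinearMap.trace ℂ V (V.ρ (g * tG)) = -LinearMap.trace ℂ V (V.ρ g)
        rw [map_mul, hct, hctm1]
        have hneg : V.ρ g * ((-1 : ℂ) • (LinearMap.id : V →ₗ[ℂ] V)) = -(V.ρ g) := by
          rw [show (LinearMap.id : V →ₗ[ℂ] V) = 1 from rfl, mul_smul_comm, mul_one,
            neg_smul, one_smul]
        rw [hneg, map_neg]
      rw [hconj, h3] at h1
      linear_combination -h1 / 2
    have hsplit : ∑ g : G, V.character g * V.character g⁻¹ =
        ∑ g : G, (if g ∈ Subgroup.center G then (n:ℂ) * n else 0) := by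
      refine Finset.sum_congr rfl (fun g _ => ?_)
      by_cases hgZ : g ∈ Subgroup.center G
      · rw [if_pos hgZ]
        exact hscalar_term g
          (fun x => by rw [Subgroup.mem_center_iff.mp hgZ x])
          (fun x => by rw [Subgroup.mem_center_iff.mp (inv_mem hgZ) x])
      · rw [if_neg hgZ, hvanish g hgZ, zero_mul]
    have hcount : ∑ g : G, (if g ∈ Subgroup.center G then (n:ℂ) * n else 0) =
        (K : ℂ) * ((n:ℂ) * n) := by
      rw [← Finset.sum_filter, Finset.sum_const, nsmul_eq_mul]
      congr 1
      norm_cast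
      rw [hKdef, Nat.card_eq_fintype_card]
      exact (Fintype.card_subtype _).symm
    rw [hsplit, hcount] at horth
    have hKC0 : (K : ℂ) ≠ 0 := Nat.cast_ne_zero.mpr (by omega)
    have hnn : (n : ℂ) * n = ((2 ^ e : ℕ) : ℂ) := by
      apply mul_left_cancel₀ hKC0
      rw [horth, h2M]
      push_cast
      ring
    have hnn' : n * n = 2 ^ e := by exact_mod_cast hnn
    obtain ⟨k, hk⟩ := heven
    have hk2 : e / 2 = k := by omega
    have hnk : n = 2 ^ k := by
      have h2 : n ^ 2 = (2 ^ k) ^ 2 := by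
        rw [pow_two, pow_two, hnn', hk, pow_add]
      exact Nat.pow_left_injective (by norm_num) h2
    rw [hchar1, hnk, hk2]
    push_cast
    ring
end

section
/- Let E = σ_y ⊗ σ_x ⊗ σ_y ⊗ σ_x ⊗ ⋯ (e_0 tensor factors, alternating starting with σ_y). Then E² = I_{2^{e_0}} and E F_k E = (−1)^{e_0}(−1)^{k−1} F_k for all 1 ≤ k ≤ 2e_0, where F_k are the Clifford matrices F_{2k_0−1} = I_2^{⊗(e_0−k_0)} ⊗ σ_x ⊗ σ_z^{⊗(k_0−1)}, F_{2k_0} = I_2^{⊗(e_0−k_0)} ⊗ σ_y ⊗ σ_z^{⊗(k_0−1)}. -/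
open Matrix

/-- The Pauli matrix σ_x. -/
noncomputable def pauliX : Matrix (Fin 2) (Fin 2) ℂ := !![0, 1; 1, 0]

/-- The Pauli matrix σ_y. -/
noncomputable def pauliY : Matrix (Fin 2) (Fin 2) ℂ := !![0, -Complex.I; Complex.I, 0]

/-- The Pauli matrix σ_z. -/
noncomputable def pauliZ : Matrix (Fin 2) (Fin 2) ℂ := !![1, 0; 0, -1]

/-- The `a`-th tensor factor (counted from the left) of the Clifford matrix `F_k`:
for `k = 2k₀−1` it is `I_2^{⊗(e₀−k₀)} ⊗ σ_x ⊗ σ_z^{⊗(k₀−1)}`, for `k = 2k₀` it is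
`I_2^{⊗(e₀−k₀)} ⊗ σ_y ⊗ σ_z^{⊗(k₀−1)}`, and `F_{2e₀+1} = σ_z^{⊗e₀}`. -/
noncomputable def cliffordFactor (e₀ k : ℕ) (a : Fin e₀) : Matrix (Fin 2) (Fin 2) ℂ :=
  if k = 2 * e₀ + 1 then pauliZ
  else
    if (a : ℕ) < e₀ - (k + 1) / 2 then 1
    else if (a : ℕ) = e₀ - (k + 1) / 2 then (if k % 2 = 1 then pauliX else pauliY)
    else pauliZ

/-- The Clifford matrix `F_k` of size `2^{e₀} × 2^{e₀}`, realized as the Kronecker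
(tensor) product of its `e₀` factors, with rows and columns indexed by
`Fin e₀ → Fin 2`. -/
noncomputable def cliffordF (e₀ k : ℕ) :
    Matrix (Fin e₀ → Fin 2) (Fin e₀ → Fin 2) ℂ :=
  fun i j => ∏ a : Fin e₀, cliffordFactor e₀ k a (i a) (j a)


/-- The matrix `E = σ_y ⊗ σ_x ⊗ σ_y ⊗ σ_x ⊗ ⋯` (`e₀` alternating tensor factors
starting with `σ_y`), realized with rows and columns indexed by `Fin e₀ → Fin 2`. -/
noncomputable def cliffordE (e₀ : ℕ) :
    Matrix (Fin e₀ → Fin 2) (Fin e₀ → Fin 2) ℂ :=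
  fun i j => ∏ a : Fin e₀, (if (a : ℕ) % 2 = 0 then pauliY else pauliX) (i a) (j a)

private lemma pX2 : pauliX * pauliX = 1 := by
  rw [pauliX, Matrix.mul_fin_two, Matrix.one_fin_two]; norm_num
private lemma pY2 : pauliY * pauliY = 1 := by
  rw [pauliY, Matrix.mul_fin_two, Matrix.one_fin_two]; norm_num [Complex.I_mul_I]
private lemma pYXY : pauliY * pauliX * pauliY = -pauliX := by
  rw [pauliX, pauliY, Matrix.mul_fin_two, Matrix.mul_fin_two]
  ext i j; fin_cases i <;> fin_cases j <;> simp
private lemma pXYX : pauliX * pauliY * pauliX = -pauliY := by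
  rw [pauliX, pauliY, Matrix.mul_fin_two, Matrix.mul_fin_two]
  ext i j; fin_cases i <;> fin_cases j <;> simp
private lemma pXZX : pauliX * pauliZ * pauliX = -pauliZ := by
  rw [pauliX, pauliZ, Matrix.mul_fin_two, Matrix.mul_fin_two]
  ext i j; fin_cases i <;> fin_cases j <;> simp
private lemma pYZY : pauliY * pauliZ * pauliY = -pauliZ := by
  rw [pauliY, pauliZ, Matrix.mul_fin_two, Matrix.mul_fin_two]
  ext i j; fin_cases i <;> fin_cases j <;> simp

/-- Multiplication of entrywise tensor-product matrices is factorwise. -/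
private lemma prodMatrix_mul {n : ℕ} (A B : Fin n → Matrix (Fin 2) (Fin 2) ℂ) :
    (Matrix.of fun (i j : Fin n → Fin 2) => ∏ a, A a (i a) (j a)) *
      (Matrix.of fun (i j : Fin n → Fin 2) => ∏ a, B a (i a) (j a))
      = Matrix.of fun (i j : Fin n → Fin 2) => ∏ a, (A a * B a) (i a) (j a) := by
  ext i j
  simp only [Matrix.mul_apply, Matrix.of_apply]
  rw [Fintype.prod_sum fun (a : Fin n) (x : Fin 2) => A a (i a) x * B a x (j a)]
  exact Finset.sum_congr rfl fun x _ => (Finset.prod_mul_distrib).symm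

private noncomputable def eFac (a : ℕ) : Matrix (Fin 2) (Fin 2) ℂ :=
  if a % 2 = 0 then pauliY else pauliX

private lemma eFac_sq (a : ℕ) : eFac a * eFac a = 1 := by
  unfold eFac; split_ifs
  · exact pY2
  · exact pX2

private lemma cliffordE_eq (e₀ : ℕ) :
    cliffordE e₀ = Matrix.of fun i j => ∏ a : Fin e₀, eFac a (i a) (j a) := rfl

private lemma cliffordF_eq (e₀ k : ℕ) :
    cliffordF e₀ k
      = Matrix.of fun i j => ∏ a : Fin e₀, cliffordFactor e₀ k a (i a) (j a) := rfl

/-- The per-factor conjugation identity. -/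
private lemma conj_factor (e₀ k : ℕ) (hk1 : 1 ≤ k) (hk2 : k ≤ 2 * e₀) (a : Fin e₀) :
    eFac a * cliffordFactor e₀ k a * eFac a =
      (((if (a : ℕ) < e₀ - (k + 1) / 2 then 1 else -1) *
        (if (a : ℕ) = e₀ - (k + 1) / 2 then (if (k + a) % 2 = 1 then 1 else -1) else 1) : ℂ))
        • cliffordFactor e₀ k a := by
  have hne : k ≠ 2 * e₀ + 1 := by omega
  unfold cliffordFactor eFac
  rw [if_neg hne]
  split_ifs <;>
    first
      | (exfalso; omega)
      | norm_num [pX2, pY2, pXYX, pYXY, pXZX, pYZY]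

private lemma neg_one_pow_mod2 (x y : ℕ) (h : x % 2 = y % 2) : (-1 : ℂ) ^ x = (-1) ^ y := by
  rcases Nat.even_or_odd x with hx | hx
  · have hx' : x % 2 = 0 := Nat.even_iff.1 hx
    rw [hx.neg_one_pow, (Nat.even_iff.2 (by omega) : Even y).neg_one_pow]
  · have hx' : x % 2 = 1 := Nat.odd_iff.1 hx
    rw [hx.neg_one_pow, (Nat.odd_iff.2 (by omega) : Odd y).neg_one_pow]

/-- The total sign. -/
private lemma sign_prod (e₀ k : ℕ) (hk1 : 1 ≤ k) (hk2 : k ≤ 2 * e₀) :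
    (∏ a : Fin e₀,
      (((if (a : ℕ) < e₀ - (k + 1) / 2 then 1 else -1) *
        (if (a : ℕ) = e₀ - (k + 1) / 2 then (if (k + a) % 2 = 1 then 1 else -1) else 1) : ℂ)))
      = (-1 : ℂ) ^ e₀ * (-1 : ℂ) ^ (k - 1) := by
  set m := e₀ - (k + 1) / 2 with hm
  have hmlt : m < e₀ := by omega
  rw [Finset.prod_mul_distrib]
  have h1 : (∏ a : Fin e₀, ((if (a : ℕ) < m then 1 else -1) : ℂ)) = (-1 : ℂ) ^ (e₀ - m) := by
    rw [Fin.prod_univ_eq_prod_range (fun a => ((if a < m then 1 else -1) : ℂ))]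
    rw [Finset.prod_ite, Finset.prod_const_one, one_mul, Finset.prod_const]
    congr 1
    rw [show Finset.filter (fun n => ¬ n < m) (Finset.range e₀) = Finset.Ico m e₀ from by
      ext n; simp; omega]
    simp
  have h2 : (∏ a : Fin e₀,
      ((if (a : ℕ) = m then (if (k + a) % 2 = 1 then 1 else -1) else 1) : ℂ))
      = (if (k + m) % 2 = 1 then 1 else -1) := by
    refine (Finset.prod_eq_single (⟨m, hmlt⟩ : Fin e₀) ?_ ?_).trans ?_
    · intro b _ hb
      exact if_neg (fun h => hb (Fin.ext h))
    · intro h; exact absurd (Finset.mem_univ _) h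
    · simp
  rw [h1, h2, ← pow_add]
  split_ifs with hpar
  · rw [mul_one]
    exact neg_one_pow_mod2 _ _ (by omega)
  · rw [show ((-1 : ℂ) ^ (e₀ - m) * -1) = (-1 : ℂ) ^ (e₀ - m + 1) from by rw [pow_succ]]
    exact neg_one_pow_mod2 _ _ (by omega)

/-- `E² = I_{2^{e₀}}` and `E F_k E = (−1)^{e₀}(−1)^{k−1} F_k` for `1 ≤ k ≤ 2e₀`. -/
theorem stmt_10 (e₀ : ℕ) (he₀ : 1 ≤ e₀) :
    cliffordE e₀ * cliffordE e₀ = 1 ∧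
    ∀ k, 1 ≤ k → k ≤ 2 * e₀ →
      cliffordE e₀ * cliffordF e₀ k * cliffordE e₀
        = ((-1 : ℂ) ^ e₀ * (-1 : ℂ) ^ (k - 1)) • cliffordF e₀ k := by
  constructor
  · rw [cliffordE_eq, prodMatrix_mul]
    ext i j
    simp only [Matrix.of_apply, eFac_sq]
    by_cases h : i = j
    · subst h; simp [Matrix.one_apply]
    · obtain ⟨a, ha⟩ : ∃ a, i a ≠ j a := by
        by_contra hc; push_neg at hc; exact h (funext hc)
      rw [Matrix.one_apply_ne h]
      exact Finset.prod_eq_zero (Finset.mem_univ a) (by simp [Matrix.one_apply, ha])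
  · intro k hk1 hk2
    rw [cliffordE_eq, cliffordF_eq, prodMatrix_mul, prodMatrix_mul]
    ext i j
    simp only [Matrix.of_apply, Matrix.smul_apply, smul_eq_mul,
      conj_factor e₀ k hk1 hk2]
    rw [Finset.prod_mul_distrib, sign_prod e₀ k hk1 hk2]
end

section
/- Let p be an odd prime, λ a strict partition of n with l parts none divisible by p, containing parts n_{j_0} and p − n_{j_0} (both < p). Let λ' be λ with both parts removed ('type 3' bar operation). With N_λ^η defined as (−1)^{⌊(n−l)/2⌋} ∏_{n_j odd} n_j ∏_{n_j even} n_j/(2η), one has (N_λ^η/p)·(N_{λ'}^η/p) = ((−1)/p)^{n−l}·(2η/p). -/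
/-- The quantity `N_λ^η = (−1)^{⌊(n−l)/2⌋} · ∏_{n_j odd} n_j · ∏_{n_j even} n_j/(2η)`
attached to a strict partition `λ` (given as a list of parts) of `n` into `l` parts. -/
def NvalQ (η : ℤ) (L : List ℕ) : ℚ :=
  (-1 : ℚ) ^ ((L.sum - L.length) / 2) *
    (((L.filter (fun x => x % 2 = 1)).map (fun x => (x : ℚ))).prod) *
    (((L.filter (fun x => x % 2 = 0)).map (fun x => (x : ℚ) / (2 * (η : ℚ)))).prod)

/-- The Legendre symbol of a rational number `r = a/b` (in lowest terms), defined as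
`(a/p)·(b/p)`. -/
def legQ (p : ℕ) [Fact p.Prime] (r : ℚ) : ℤ :=
  legendreSym p r.num * legendreSym p (r.den : ℤ)

/-!
Clearing the denominators `(2η)^t` (`t` the number of even parts), `(N_λ^η/p)` becomes
`((−1)/p)^⌊(n−l)/2⌋ · (∏ n_j/p) · (2η/p)^t`. Removing the pair `a, p − a` divides `∏ n_j` by
`a(p − a) ≡ −a² (mod p)`, whose symbol is `((−1)/p)`, and removes exactly one even part because
`a + (p − a) = p` is odd. In the product of the two symbols the common factors square to `1`, and
`⌊(n−l)/2⌋ + ⌊(n−l−p+2)/2⌋ + 1 = (n−l−p+2) + (p−1)/2`, which has the parity of `n − l` whenever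
`((−1)/p) = −1`, i.e. `p ≡ 3 (mod 4)`.
-/

theorem List.prod_map_div_const {α K : Type*} [DivisionCommMonoid K] (l : List α) (f : α → K)
    (c : K) : (l.map fun x => f x / c).prod = (l.map f).prod / c ^ l.length := by
  induction l with
  | nil => simp
  | cons x l ih =>
    rw [map_cons, prod_cons, ih, map_cons, prod_cons, length_cons, pow_succ', div_mul_div_comm]

theorem List.perm_cons_cons_of_coe_eq_erase_erase {α : Type*} [DecidableEq α] {L L' : List α}
    {a b : α} (ha : a ∈ L) (hb : b ∈ L) (hab : a ≠ b)
    (h : (L' : Multiset α) = ((L : Multiset α).erase a).erase b) : L.Perm (a :: b :: L') := by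
  rw [← Multiset.coe_eq_coe, ← Multiset.cons_coe, ← Multiset.cons_coe, h,
    Multiset.cons_erase ((Multiset.mem_erase_of_ne hab.symm).mpr hb), Multiset.cons_erase ha]

theorem length_filter_even_cons_cons {a b : ℕ} (hab : (a + b) % 2 = 1) (l : List ℕ) :
    ((a :: b :: l).filter (· % 2 = 0)).length = (l.filter (· % 2 = 0)).length + 1 := by
  simp only [List.filter_cons]
  split_ifs <;> simp_all <;> omega

theorem quadraticChar_inv {F : Type*} [Field F] [Fintype F] [DecidableEq F] (a : F) :
    quadraticChar F a⁻¹ = quadraticChar F a := by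
  rw [← MulChar.inv_apply', (quadraticChar_isQuadratic F).inv]

theorem NvalQ_eq_div (η : ℤ) (L : List ℕ) :
    NvalQ η L = (((-1) ^ ((L.sum - L.length) / 2) * L.prod : ℤ) : ℚ) /
      (((2 * η) ^ (L.filter (· % 2 = 0)).length : ℤ) : ℚ) := by
  have hodd : L.filter (· % 2 = 1) = L.filter (¬ · % 2 = 0) :=
    List.filter_congr fun x _ => by simp only [Nat.mod_two_ne_zero]
  have hsplit := List.prod_map_filter_mul_prod_map_filter_not (· % 2 = 0) (fun x : ℕ => (x : ℚ)) L
  simp only [NvalQ, bind_pure_comp, List.map_eq_map, List.map_map, Function.comp_def,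
    List.prod_map_div_const, hodd]
  push_cast [List.map_map, Function.comp_def, ← hsplit]
  ring

theorem NvalQ_perm (η : ℤ) {L₁ L₂ : List ℕ} (h : L₁.Perm L₂) : NvalQ η L₁ = NvalQ η L₂ := by
  rw [NvalQ_eq_div, NvalQ_eq_div, h.sum_eq, h.length_eq, h.prod_eq, (h.filter _).length_eq]

section Legendre

variable (p : ℕ) [Fact p.Prime]

theorem legendreSym_pow (a : ℤ) (k : ℕ) : legendreSym p (a ^ k) = legendreSym p a ^ k := by
  rw [legendreSym, Int.cast_pow, map_pow, legendreSym]

theorem legendreSym_mul_sub_self {a : ℕ} (hap : a ≤ p) (ha : ¬ p ∣ a) :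
    legendreSym p ((a * (p - a) : ℕ) : ℤ) = legendreSym p (-1) := by
  have ha0 : (a : ZMod p) ≠ 0 := by rwa [Ne, ZMod.natCast_eq_zero_iff]
  have hneg : (((a * (p - a) : ℕ) : ℤ) : ZMod p) = -1 * (a : ZMod p) ^ 2 := by
    push_cast [Nat.cast_sub hap, ZMod.natCast_self]
    ring
  rw [legendreSym, hneg, map_mul, map_pow, quadraticChar_sq_one ha0, mul_one, legendreSym,
    Int.cast_neg, Int.cast_one]

theorem legendreSym_neg_one_pow_div_two (hp : p ≠ 2) :
    legendreSym p (-1) ^ (p / 2) = legendreSym p (-1) := by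
  rw [legendreSym.at_neg_one hp]
  have := (Fact.out : p.Prime).eq_two_or_odd
  rcases Nat.odd_mod_four_iff.mp (by omega : p % 2 = 1) with h | h
  · rw [ZMod.χ₄_nat_one_mod_four h, one_pow]
  · rw [ZMod.χ₄_nat_three_mod_four h, (Nat.odd_iff.mpr (by omega : p / 2 % 2 = 1)).neg_one_pow]

theorem legendreSym_neg_one_pow_floor_add (hp : p ≠ 2) (m : ℕ) :
    legendreSym p (-1) ^ ((m + (p - 2)) / 2 + m / 2 + 1) = legendreSym p (-1) ^ (m + (p - 2)) := by
  have := (Fact.out : p.Prime).two_le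
  have := (Fact.out : p.Prime).eq_two_or_odd
  rw [show (m + (p - 2)) / 2 + m / 2 + 1 = m + p / 2 by omega,
    show m + (p - 2) = m + (2 * (p / 2 - 1) + 1) by omega, pow_add, pow_add,
    legendreSym_neg_one_pow_div_two p hp, pow_succ, pow_mul, legendreSym.sq_one p (by simp),
    one_pow, one_mul]

theorem intCast_two_mul_ne_zero (hp : p ≠ 2) {η : ℤ} (hη : η = 1 ∨ η = -1) :
    ((2 * η : ℤ) : ZMod p) ≠ 0 := by
  rw [Ne, ZMod.intCast_zmod_eq_zero_iff_dvd, Int.natCast_dvd,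
    show (2 * η).natAbs = 2 by rcases hη with rfl | rfl <;> rfl]
  exact fun h => hp ((Nat.prime_dvd_prime_iff_eq Fact.out Nat.prime_two).mp h)

theorem legQ_eq_quadraticChar (r : ℚ) : legQ p r = quadraticChar (ZMod p) (r : ZMod p) := by
  rw [Rat.cast_def, div_eq_mul_inv, map_mul, quadraticChar_inv, legQ, legendreSym, legendreSym,
    Int.cast_natCast]

theorem legQ_intCast_div (x : ℤ) {y : ℤ} (hy : (y : ZMod p) ≠ 0) :
    legQ p (x / y) = legendreSym p x * legendreSym p y := by
  rw [legQ_eq_quadraticChar, Rat.cast_div_of_ne_zero (by simp) (by simpa using hy),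
    Rat.cast_intCast, Rat.cast_intCast, div_eq_mul_inv, map_mul, quadraticChar_inv]
  rfl

theorem legQ_NvalQ {η : ℤ} (hη : ((2 * η : ℤ) : ZMod p) ≠ 0) (L : List ℕ) :
    legQ p (NvalQ η L) = legendreSym p (-1) ^ ((L.sum - L.length) / 2) * legendreSym p L.prod *
      legendreSym p (2 * η) ^ (L.filter (· % 2 = 0)).length := by
  rw [NvalQ_eq_div, legQ_intCast_div p _ (by push_cast at hη ⊢; exact pow_ne_zero _ hη),
    legendreSym.mul, legendreSym_pow, legendreSym_pow]

theorem legQ_NvalQ_mul_NvalQ_cons_cons (hp : p ≠ 2) {η : ℤ} (hη : ((2 * η : ℤ) : ZMod p) ≠ 0)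
    {a : ℕ} (hap : a < p) (ha : ¬ p ∣ a) {L : List ℕ} (hL : L.length ≤ L.sum)
    (hLp : ¬ p ∣ L.prod) :
    legQ p (NvalQ η (a :: (p - a) :: L)) * legQ p (NvalQ η L) =
      legendreSym p (-1) ^ ((a :: (p - a) :: L).sum - (a :: (p - a) :: L).length) *
        legendreSym p (2 * η) := by
  have hp_odd := (Fact.out : p.Prime).eq_two_or_odd.resolve_left hp
  have := (Fact.out : p.Prime).two_le
  have hLsq : legendreSym p L.prod ^ 2 = 1 := legendreSym.sq_one p <| by
    rwa [Int.cast_natCast, Ne, ZMod.natCast_eq_zero_iff]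
  have hexp : (a :: (p - a) :: L).sum - (a :: (p - a) :: L).length = L.sum - L.length + (p - 2) := by
    simp only [List.sum_cons, List.length_cons]
    omega
  rw [legQ_NvalQ p hη, legQ_NvalQ p hη, length_filter_even_cons_cons (by omega), hexp,
    List.prod_cons, List.prod_cons, ← mul_assoc a, Nat.cast_mul (a * (p - a)), legendreSym.mul,
    legendreSym_mul_sub_self p hap.le ha, ← legendreSym_neg_one_pow_floor_add p hp]
  calc _ = legendreSym p (-1) ^ ((L.sum - L.length + (p - 2)) / 2 + (L.sum - L.length) / 2 + 1) *
        legendreSym p L.prod ^ 2 * (legendreSym p (2 * η) ^ 2) ^ (L.filter (· % 2 = 0)).length *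
        legendreSym p (2 * η) := by ring
    _ = _ := by rw [hLsq, legendreSym.sq_one p hη, one_pow, mul_one, mul_one]

end Legendre

theorem stmt_15_general (p : ℕ) [Fact p.Prime] (hodd : p ≠ 2) (η : ℤ) (hη : η = 1 ∨ η = -1)
    (L L' : List ℕ)
    (hpos : ∀ x ∈ L, 0 < x) (hndvd : ∀ x ∈ L, ¬ p ∣ x)
    (a : ℕ) (ha : a ∈ L) (hap : a < p) (ha' : p - a ∈ L)
    (hrel : (L' : Multiset ℕ) = ((L : Multiset ℕ).erase a).erase (p - a)) :
    legQ p (NvalQ η L) * legQ p (NvalQ η L') =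
      (legendreSym p (-1)) ^ (L.sum - L.length) * legendreSym p (2 * η) := by
  have hp_odd := (Fact.out : p.Prime).eq_two_or_odd.resolve_left hodd
  have hperm : L.Perm (a :: (p - a) :: L') :=
    List.perm_cons_cons_of_coe_eq_erase_erase ha ha' (by omega) hrel
  have hsub : ∀ x ∈ L', x ∈ L := fun x hx => hperm.mem_iff.mpr (by simp [hx])
  rw [NvalQ_perm η hperm, hperm.sum_eq, hperm.length_eq]
  exact legQ_NvalQ_mul_NvalQ_cons_cons p hodd (intCast_two_mul_ne_zero p hodd hη) hap (hndvd a ha)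
    (List.length_le_sum_of_one_le _ fun x hx => hpos x (hsub x hx))
    ((Nat.prime_iff.mp Fact.out).not_dvd_prod fun x hx => hndvd x (hsub x hx))

/-- Let `p` be an odd prime, `λ` a strict partition of `n` into `l` parts none
divisible by `p`, containing parts `a` and `p − a`, and `λ'` obtained from `λ` by a
type-3 bar operation removing both. Then
`(N_λ^η/p)·(N_{λ'}^η/p) = ((−1)/p)^{n−l}·(2η/p)`. -/
theorem stmt_15 (p : ℕ) [Fact p.Prime] (hodd : p ≠ 2) (η : ℤ) (hη : η = 1 ∨ η = -1)
    (L L' : List ℕ) (hL : L.Pairwise (· > ·)) (hL' : L'.Pairwise (· > ·))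
    (hpos : ∀ x ∈ L, 0 < x) (hndvd : ∀ x ∈ L, ¬ p ∣ x)
    (a : ℕ) (ha : a ∈ L) (hap : a < p) (ha' : p - a ∈ L)
    (hrel : (L' : Multiset ℕ) = ((L : Multiset ℕ).erase a).erase (p - a)) :
    legQ p (NvalQ η L) * legQ p (NvalQ η L') =
      (legendreSym p (-1)) ^ (L.sum - L.length) * legendreSym p (2 * η) :=
  stmt_15_general p hodd η hη L L' hpos hndvd a ha hap ha' hrel
end
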